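/- arXiv:1406.5936 — 8 statements merged into one kernel-verified Lean document; each statement's English description precedes it below -/
import Mathlib

section
/- The vector h₁ is a hole of the semigroup S: h₁ lies in the subgroup of ℤ^I generated by the 16 vectors A(x), the double 2•h₁ lies in S, but h₁ itself does not lie in S. -/
/-- A state of the graph `K̃₄` is a quadruple `(x₁,x₂,x₃,x₄) ∈ {0,1}⁴`,
encoded as a function `Fin 4 → Fin 2` (index `i` is vertex `i+1`). -/
abbrev K4State := Fin 4 → Fin 2

/-- The index set `I = {0,1}³ ⊕ ({1,2,3} × {0,1}²)`: triangle coordinates and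
edge coordinates. -/
abbrev K4Index := (Fin 2 × Fin 2 × Fin 2) ⊕ (Fin 3 × Fin 2 × Fin 2)

/-- The marginal map of `K̃₄`: `A x` has entry 1 at the triangle coordinate
`(x₁,x₂,x₃)`, entry 1 at the edge coordinate `(i,(x_i,x₄))` for `i ∈ {1,2,3}`,
and entry 0 elsewhere. -/
def A (x : K4State) : K4Index → ℤ
  | Sum.inl (a, b, c) => if x 0 = a ∧ x 1 = b ∧ x 2 = c then 1 else 0
  | Sum.inr (i, a, b) => if x i.castSucc = a ∧ x 3 = b then 1 else 0

/-- The additive submonoid `S` of `ℤ^I` generated by the 16 vectors `A x`. -/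
def S : AddSubmonoid (K4Index → ℤ) := AddSubmonoid.closure (Set.range A)

/-- The fundamental hole `h₁`: triangle coordinate `(a,b,c)` equal to 1 iff
`a ⊕ b ⊕ c = 0`, all twelve edge coordinates equal to 1. -/
def h₁ : K4Index → ℤ
  | Sum.inl (a, b, c) => if a + b + c = 0 then 1 else 0
  | Sum.inr _ => 1

/-- The fundamental hole `h₂`: triangle coordinate `(a,b,c)` equal to 1 iff
`a ⊕ b ⊕ c = 1`, all twelve edge coordinates equal to 1. -/
def h₂ : K4Index → ℤ
  | Sum.inl (a, b, c) => if a + b + c = 1 then 1 else 0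
  | Sum.inr _ => 1

/-!
Since every `A x` has exactly one nonzero triangle coordinate, a decomposition `h₁ = ∑ m x • A x`
uses each even triangle `000, 101, 110` once, with some apex value `x₄`. Any two of these three
triangles agree in one of their first three coordinates, so the corresponding edge coordinate of
`h₁`, which is `1`, forbids them to share the apex value. Three pairwise different apex values in
`{0,1}` cannot exist. Only integrality fails: weight `1/2` on each of the eight states with
even triangle yields `h₁`.
-/

open Finset

lemma A_nonneg (x : K4State) (j : K4Index) : 0 ≤ A x j := by
  rcases j with ⟨a, b, c⟩ | ⟨i, a, b⟩ <;> simp only [A] <;> split_ifs <;> simp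

lemma A_inl_eq_zero (a b c : Fin 2) (x : K4State) (h₀ : x ≠ ![a, b, c, 0])
    (h₁ : x ≠ ![a, b, c, 1]) : A x (.inl (a, b, c)) = 0 := by
  revert a b c x
  decide

lemma sum_smul_A_apply_inl (m : K4State → ℕ) (a b c : Fin 2) :
    (∑ x, m x • A x) (.inl (a, b, c)) = m ![a, b, c, 0] + m ![a, b, c, 1] := by
  rw [Finset.sum_apply, Fintype.sum_eq_add ![a, b, c, 0] ![a, b, c, 1]]
  · simp [A]
  · simp [funext_iff, Fin.forall_fin_succ]
  · rintro x ⟨h₀, h₁⟩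
    simp [A_inl_eq_zero a b c x h₀ h₁]

lemma add_le_sum_smul_A_apply_inr (m : K4State → ℕ) {y z : K4State} (hyz : y ≠ z) (i : Fin 3)
    (hi : y i.castSucc = z i.castSucc) (h₃ : y 3 = z 3) :
    (m y + m z : ℤ) ≤ (∑ x, m x • A x) (.inr (i, y i.castSucc, y 3)) := by
  set j : K4Index := .inr (i, y i.castSucc, y 3)
  have hy : A y j = 1 := by simp [j, A]
  have hz : A z j = 1 := by simp [j, A, hi, h₃]
  calc (m y + m z : ℤ) = ∑ x ∈ {y, z}, m x • A x j := by simp [sum_pair hyz, hy, hz]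
    _ ≤ ∑ x, m x • A x j :=
      sum_le_sum_of_subset_of_nonneg (subset_univ _) fun x _ _ => nsmul_nonneg (A_nonneg x j) _
    _ = (∑ x, m x • A x) j := (Finset.sum_apply ..).symm

theorem h₁_notMem_S : h₁ ∉ S := by
  intro h
  obtain ⟨m, hm⟩ := AddSubmonoid.exists_of_mem_closure_range _ _ h
  have triangle (a b c : Fin 2) :
      (m ![a, b, c, 0] + m ![a, b, c, 1] : ℤ) = h₁ (.inl (a, b, c)) := by
    rw [hm, sum_smul_A_apply_inl]
  have edge {y z : K4State} (hyz : y ≠ z) (i : Fin 3) (hi : y i.castSucc = z i.castSucc)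
      (h₃ : y 3 = z 3) : (m y + m z : ℤ) ≤ h₁ (.inr (i, y i.castSucc, y 3)) := by
    rw [hm]
    exact add_le_sum_smul_A_apply_inr m hyz i hi h₃
  have h000 := triangle 0 0 0
  have h101 := triangle 1 0 1
  have h110 := triangle 1 1 0
  have e₁ (b : Fin 2) :=
    edge (y := ![0, 0, 0, b]) (z := ![1, 0, 1, b]) (Function.ne_iff.2 ⟨0, by simp⟩) 1 rfl rfl
  have e₂ (b : Fin 2) :=
    edge (y := ![0, 0, 0, b]) (z := ![1, 1, 0, b]) (Function.ne_iff.2 ⟨0, by simp⟩) 2 rfl rfl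
  have e₃ (b : Fin 2) :=
    edge (y := ![1, 0, 1, b]) (z := ![1, 1, 0, b]) (Function.ne_iff.2 ⟨1, by simp⟩) 0 rfl rfl
  simp only [h₁] at h000 h101 h110 e₁ e₂ e₃
  have := e₁ 0; have := e₁ 1; have := e₂ 0; have := e₂ 1; have := e₃ 0; have := e₃ 1
  omega

lemma h₁_eq_sum_sub : h₁ = A ![0, 1, 1, 0] + A ![1, 0, 1, 1] + A ![1, 1, 0, 1] + A ![0, 0, 0, 1]
    - A ![1, 0, 0, 1] + A ![1, 0, 0, 0] := by
  decide

lemma two_smul_h₁_eq_sum : 2 • h₁ = ∑ x : K4State with x 0 + x 1 + x 2 = 0, A x := by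
  decide

/-- `h₁` is a hole of `S`: it lies in the subgroup generated by the vectors `A x`,
its double lies in `S`, but `h₁` itself does not lie in `S`. -/
theorem h₁_is_hole :
    h₁ ∈ AddSubgroup.closure (Set.range A) ∧ 2 • h₁ ∈ S ∧ h₁ ∉ S := by
  refine ⟨?_, ?_, h₁_notMem_S⟩
  · have mem (x : K4State) : A x ∈ AddSubgroup.closure (Set.range A) :=
      AddSubgroup.subset_closure ⟨x, rfl⟩
    rw [h₁_eq_sum_sub]
    exact add_mem (sub_mem (add_mem (add_mem (add_mem (mem _) (mem _)) (mem _)) (mem _)) (mem _))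
      (mem _)
  · rw [two_smul_h₁_eq_sum]
    exact sum_mem fun x _ => AddSubmonoid.subset_closure ⟨x, rfl⟩
end

section
/- One has the identity h₁ + h₂ = Σ_x A(x), the sum taken over the eight states x ∈ {(0,0,0,0),(0,0,1,1),(0,1,0,1),(0,1,1,0),(1,0,0,0),(1,0,1,1),(1,1,0,1),(1,1,1,0)}. -/
/-- `h₁ + h₂` is the sum of the vectors `A x` over the eight listed states
`(x₁,x₂,x₃,x₄)`. -/
theorem h₁_add_h₂_eq_sum :
    h₁ + h₂ =
      ∑ x ∈ ({![0,0,0,0], ![0,0,1,1], ![0,1,0,1], ![0,1,1,0],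
               ![1,0,0,0], ![1,0,1,1], ![1,1,0,1], ![1,1,1,0]} : Finset K4State),
        A x := by
  funext i
  rcases i with ⟨a,b,c⟩|⟨i,a,b⟩
  · fin_cases a <;> fin_cases b <;> fin_cases c <;>
      simp [h₁, h₂, A, Finset.sum_apply] <;> decide
  · fin_cases i <;> fin_cases a <;> fin_cases b <;>
      simp [h₁, h₂, A, Finset.sum_apply] <;> decide
end

section
/- The two families of holes are disjoint: no vector of ℤ^I is simultaneously of the form h₁ + Σ_{x∈X₀} λ(x)•A(x) for some λ : X₀ → ℕ and of the form h₂ + Σ_{x∈X₁} μ(x)•A(x) for some μ : X₁ → ℕ. -/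
/-- The set `X₀` of states with `x₁ ⊕ x₂ ⊕ x₃ = 0` (XOR). -/
abbrev X₀ := {x : K4State // x 0 + x 1 + x 2 = 0}

/-- The set `X₁` of states with `x₁ ⊕ x₂ ⊕ x₃ = 1` (opposite of XOR). -/
abbrev X₁ := {x : K4State // x 0 + x 1 + x 2 = 1}

/-- The projection `π : ℤ^I → ℤ^({1,2,3} × {0,1}²)` forgetting the eight
triangle coordinates (the three-star marginal). -/
def pr (v : K4Index → ℤ) : Fin 3 × Fin 2 × Fin 2 → ℤ := fun j => v (Sum.inr j)

/-- The linear functional `l₁`: sum of the triangle coordinates over the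
triples with `a ⊕ b ⊕ c = 0`. -/
def l₁ (y : K4Index → ℤ) : ℤ :=
  ∑ t : Fin 2 × Fin 2 × Fin 2, if t.1 + t.2.1 + t.2.2 = 0 then y (Sum.inl t) else 0

/-- The linear functional `l₂`: sum of the triangle coordinates over the
triples with `a ⊕ b ⊕ c = 1`. -/
def l₂ (y : K4Index → ℤ) : ℤ :=
  ∑ t : Fin 2 × Fin 2 × Fin 2, if t.1 + t.2.1 + t.2.2 = 1 then y (Sum.inl t) else 0

/-- The two families of holes are disjoint: no vector is simultaneously of type 1
and of type 2. -/
theorem holes_disjoint (v : K4Index → ℤ) :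
    ¬ ((∃ l : X₀ → ℕ, v = h₁ + ∑ x : X₀, (l x : ℤ) • A x.val) ∧
       (∃ m : X₁ → ℕ, v = h₂ + ∑ x : X₁, (m x : ℤ) • A x.val)) := by
  rintro ⟨⟨l, hl⟩, ⟨m, hm⟩⟩
  have h1 := congrFun hl (Sum.inl (1, 0, 0))
  have h2 := congrFun hm (Sum.inl (1, 0, 0))
  simp only [Pi.add_apply, Finset.sum_apply, Pi.smul_apply, smul_eq_mul] at h1 h2
  have e1 : v (Sum.inl (1, 0, 0)) = 0 := by
    rw [h1]
    have hh : h₁ (Sum.inl (1, 0, 0)) = 0 := by simp [h₁]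
    rw [hh, zero_add]
    apply Finset.sum_eq_zero
    intro x _
    have hx := x.prop
    have hA : A x.val (Sum.inl (1, 0, 0)) = 0 := by
      simp only [A]
      split_ifs with h
      · exfalso
        obtain ⟨a, b, c⟩ := h
        rw [a, b, c] at hx
        exact absurd hx (by decide)
      · rfl
    rw [hA, mul_zero]
  have e2 : (1 : ℤ) ≤ v (Sum.inl (1, 0, 0)) := by
    rw [h2]
    have hh : h₂ (Sum.inl (1, 0, 0)) = 1 := by simp [h₂]
    rw [hh]
    have : (0 : ℤ) ≤ ∑ x : X₁, (m x : ℤ) * A x.val (Sum.inl (1, 0, 0)) := by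
      apply Finset.sum_nonneg
      intro x _
      apply mul_nonneg (Int.natCast_nonneg _)
      simp only [A]
      split_ifs <;> norm_num
    omega
  omega
end

section
/- The eight vectors A(x) with x ∈ X₀ are linearly independent over ℤ (every ℤ-linear relation Σ_{x∈X₀} c(x)•A(x) = 0 forces c = 0), and likewise the eight vectors A(x) with x ∈ X₁ are linearly independent over ℤ. -/
def s₀ : Fin 8 → K4State :=
  ![![0,0,0,0], ![0,0,0,1], ![0,1,1,0], ![0,1,1,1], ![1,0,1,0], ![1,0,1,1], ![1,1,0,0], ![1,1,0,1]]

def s₁ : Fin 8 → K4State :=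
  ![![0,0,1,0], ![0,0,1,1], ![0,1,0,0], ![0,1,0,1], ![1,0,0,0], ![1,0,0,1], ![1,1,1,0], ![1,1,1,1]]

/-- The eight vectors `A x`, `x ∈ X₀`, are linearly independent over `ℤ`, and
likewise for `x ∈ X₁`. -/
theorem A_linearIndependent_on_parity_classes :
    (∀ c : X₀ → ℤ, ∑ x : X₀, c x • A x.val = 0 → c = 0) ∧
    (∀ c : X₁ → ℤ, ∑ x : X₁, c x • A x.val = 0 → c = 0) := by
  constructor
  · intro c h
    have hmem : ∀ i : Fin 8, (s₀ i) ∈ {x : K4State | x 0 + x 1 + x 2 = 0} := by decide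
    let e : Fin 8 → X₀ := fun i => ⟨s₀ i, hmem i⟩
    have hinj : Function.Injective e := by
      intro a b hab
      exact (by decide : Function.Injective s₀) (congrArg Subtype.val hab)
    have hbij : Function.Bijective e :=
      (Fintype.bijective_iff_injective_and_card e).2 ⟨hinj, by decide⟩
    have hsum : ∑ i : Fin 8, c (e i) • A (s₀ i) = 0 := by
      rw [Fintype.sum_bijective e hbij _ (fun x => c x • A x.val) (fun i => rfl)]
      exact h
    have h0 := congrFun hsum (Sum.inl ((0 : Fin 2),(0 : Fin 2),(0 : Fin 2)))
    have h1 := congrFun hsum (Sum.inl ((0 : Fin 2),(1 : Fin 2),(1 : Fin 2)))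
    have h2 := congrFun hsum (Sum.inl ((1 : Fin 2),(0 : Fin 2),(1 : Fin 2)))
    have h3 := congrFun hsum (Sum.inl ((1 : Fin 2),(1 : Fin 2),(0 : Fin 2)))
    have h4 := congrFun hsum (Sum.inr ((0 : Fin 3), (((0 : Fin 2)), (0 : Fin 2))))
    have h5 := congrFun hsum (Sum.inr ((0 : Fin 3), (((0 : Fin 2)), (1 : Fin 2))))
    have h6 := congrFun hsum (Sum.inr ((0 : Fin 3), (((1 : Fin 2)), (0 : Fin 2))))
    have h7 := congrFun hsum (Sum.inr ((0 : Fin 3), (((1 : Fin 2)), (1 : Fin 2))))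
    have h8 := congrFun hsum (Sum.inr ((1 : Fin 3), (((0 : Fin 2)), (0 : Fin 2))))
    have h9 := congrFun hsum (Sum.inr ((1 : Fin 3), (((0 : Fin 2)), (1 : Fin 2))))
    have h10 := congrFun hsum (Sum.inr ((1 : Fin 3), (((1 : Fin 2)), (0 : Fin 2))))
    have h11 := congrFun hsum (Sum.inr ((1 : Fin 3), (((1 : Fin 2)), (1 : Fin 2))))
    have h12 := congrFun hsum (Sum.inr ((2 : Fin 3), (((0 : Fin 2)), (0 : Fin 2))))
    have h13 := congrFun hsum (Sum.inr ((2 : Fin 3), (((0 : Fin 2)), (1 : Fin 2))))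
    have h14 := congrFun hsum (Sum.inr ((2 : Fin 3), (((1 : Fin 2)), (0 : Fin 2))))
    have h15 := congrFun hsum (Sum.inr ((2 : Fin 3), (((1 : Fin 2)), (1 : Fin 2))))
    simp only [Fin.sum_univ_eight, Pi.add_apply, Pi.smul_apply, smul_eq_mul,
      Pi.zero_apply] at h0 h1 h2 h3 h4 h5 h6 h7 h8 h9 h10 h11 h12 h13 h14 h15
    simp (config := { decide := true }) only [A, s₀, if_true, if_false,
      mul_one, mul_zero, add_zero, zero_add] at h0 h1 h2 h3 h4 h5 h6 h7 h8 h9 h10 h11 h12 h13 h14 h15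
    have hz : ∀ i : Fin 8, c (e i) = 0 := by
      intro i
      fin_cases i
      exacts [show c (e 0) = 0 by omega, show c (e 1) = 0 by omega,
        show c (e 2) = 0 by omega, show c (e 3) = 0 by omega,
        show c (e 4) = 0 by omega, show c (e 5) = 0 by omega,
        show c (e 6) = 0 by omega, show c (e 7) = 0 by omega]
    funext x
    obtain ⟨i, rfl⟩ := hbij.surjective x
    exact hz i
  · intro c h
    have hmem : ∀ i : Fin 8, (s₁ i) ∈ {x : K4State | x 0 + x 1 + x 2 = 1} := by decide
    let e : Fin 8 → X₁ := fun i => ⟨s₁ i, hmem i⟩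
    have hinj : Function.Injective e := by
      intro a b hab
      exact (by decide : Function.Injective s₁) (congrArg Subtype.val hab)
    have hbij : Function.Bijective e :=
      (Fintype.bijective_iff_injective_and_card e).2 ⟨hinj, by decide⟩
    have hsum : ∑ i : Fin 8, c (e i) • A (s₁ i) = 0 := by
      rw [Fintype.sum_bijective e hbij _ (fun x => c x • A x.val) (fun i => rfl)]
      exact h
    have h0 := congrFun hsum (Sum.inl ((0 : Fin 2),(0 : Fin 2),(1 : Fin 2)))
    have h1 := congrFun hsum (Sum.inl ((0 : Fin 2),(1 : Fin 2),(0 : Fin 2)))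
    have h2 := congrFun hsum (Sum.inl ((1 : Fin 2),(0 : Fin 2),(0 : Fin 2)))
    have h3 := congrFun hsum (Sum.inl ((1 : Fin 2),(1 : Fin 2),(1 : Fin 2)))
    have h4 := congrFun hsum (Sum.inr ((0 : Fin 3), (((0 : Fin 2)), (0 : Fin 2))))
    have h5 := congrFun hsum (Sum.inr ((0 : Fin 3), (((0 : Fin 2)), (1 : Fin 2))))
    have h6 := congrFun hsum (Sum.inr ((0 : Fin 3), (((1 : Fin 2)), (0 : Fin 2))))
    have h7 := congrFun hsum (Sum.inr ((0 : Fin 3), (((1 : Fin 2)), (1 : Fin 2))))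
    have h8 := congrFun hsum (Sum.inr ((1 : Fin 3), (((0 : Fin 2)), (0 : Fin 2))))
    have h9 := congrFun hsum (Sum.inr ((1 : Fin 3), (((0 : Fin 2)), (1 : Fin 2))))
    have h10 := congrFun hsum (Sum.inr ((1 : Fin 3), (((1 : Fin 2)), (0 : Fin 2))))
    have h11 := congrFun hsum (Sum.inr ((1 : Fin 3), (((1 : Fin 2)), (1 : Fin 2))))
    have h12 := congrFun hsum (Sum.inr ((2 : Fin 3), (((0 : Fin 2)), (0 : Fin 2))))
    have h13 := congrFun hsum (Sum.inr ((2 : Fin 3), (((0 : Fin 2)), (1 : Fin 2))))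
    have h14 := congrFun hsum (Sum.inr ((2 : Fin 3), (((1 : Fin 2)), (0 : Fin 2))))
    have h15 := congrFun hsum (Sum.inr ((2 : Fin 3), (((1 : Fin 2)), (1 : Fin 2))))
    simp only [Fin.sum_univ_eight, Pi.add_apply, Pi.smul_apply, smul_eq_mul,
      Pi.zero_apply] at h0 h1 h2 h3 h4 h5 h6 h7 h8 h9 h10 h11 h12 h13 h14 h15
    simp (config := { decide := true }) only [A, s₁, if_true, if_false,
      mul_one, mul_zero, add_zero, zero_add] at h0 h1 h2 h3 h4 h5 h6 h7 h8 h9 h10 h11 h12 h13 h14 h15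
    have hz : ∀ i : Fin 8, c (e i) = 0 := by
      intro i
      fin_cases i
      exacts [show c (e 0) = 0 by omega, show c (e 1) = 0 by omega,
        show c (e 2) = 0 by omega, show c (e 3) = 0 by omega,
        show c (e 4) = 0 by omega, show c (e 5) = 0 by omega,
        show c (e 6) = 0 by omega, show c (e 7) = 0 by omega]
    funext x
    obtain ⟨i, rfl⟩ := hbij.surjective x
    exact hz i
end

section
/- No two holes of the same type have the same three-star marginals: for λ, λ' : X₀ → ℕ, if π(h₁ + Σ_{x∈X₀} λ(x)•A(x)) = π(h₁ + Σ_{x∈X₀} λ'(x)•A(x)) then λ = λ'; and for μ, μ' : X₁ → ℕ, if π(h₂ + Σ_{x∈X₁} μ(x)•A(x)) = π(h₂ + Σ_{x∈X₁} μ'(x)•A(x)) then μ = μ'. -/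
def e0 : Fin 8 → {x : K4State // x 0 + x 1 + x 2 = 0} :=
  ![⟨![0,0,0,0], by decide⟩, ⟨![0,1,1,0], by decide⟩, ⟨![1,0,1,0], by decide⟩, ⟨![1,1,0,0], by decide⟩, ⟨![0,0,0,1], by decide⟩, ⟨![0,1,1,1], by decide⟩, ⟨![1,0,1,1], by decide⟩, ⟨![1,1,0,1], by decide⟩]
lemma e0_bij : Function.Bijective e0 := by decide
def e1 : Fin 8 → {x : K4State // x 0 + x 1 + x 2 = 1} :=
  ![⟨![1,0,0,0], by decide⟩, ⟨![0,1,0,0], by decide⟩, ⟨![0,0,1,0], by decide⟩, ⟨![1,1,1,0], by decide⟩, ⟨![1,0,0,1], by decide⟩, ⟨![0,1,0,1], by decide⟩, ⟨![0,0,1,1], by decide⟩, ⟨![1,1,1,1], by decide⟩]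
lemma e1_bij : Function.Bijective e1 := by decide

/-- No two holes of the same type have the same three-star marginals. -/
theorem holes_same_type_distinct_marginals :
    (∀ l l' : X₀ → ℕ,
      pr (h₁ + ∑ x : X₀, (l x : ℤ) • A x.val) =
        pr (h₁ + ∑ x : X₀, (l' x : ℤ) • A x.val) → l = l') ∧
    (∀ m m' : X₁ → ℕ,
      pr (h₂ + ∑ x : X₁, (m x : ℤ) • A x.val) =
        pr (h₂ + ∑ x : X₁, (m' x : ℤ) • A x.val) → m = m') := by
  constructor
  ·
    intro l l' h
    have key : ∀ j : Fin 3 × Fin 2 × Fin 2,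
        ∑ i : Fin 8, (l (e0 i) : ℤ) * A (e0 i).val (Sum.inr j) =
        ∑ i : Fin 8, (l' (e0 i) : ℤ) * A (e0 i).val (Sum.inr j) := by
      intro j
      have hj := congrFun h j
      simp only [pr, Pi.add_apply, Finset.sum_apply, Pi.smul_apply, smul_eq_mul,
        add_right_inj] at hj
      rw [← e0_bij.sum_comp (fun x => (l x : ℤ) * A x.val (Sum.inr j)),
          ← e0_bij.sum_comp (fun x => (l' x : ℤ) * A x.val (Sum.inr j))] at hj
      exact hj
    have k0 := key (0,0,0)
    have k1 := key (0,1,0)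
    have k2 := key (1,0,0)
    have k3 := key (1,1,0)
    have k4 := key (2,0,0)
    have k5 := key (2,1,0)
    have k6 := key (0,0,1)
    have k7 := key (0,1,1)
    have k8 := key (1,0,1)
    have k9 := key (1,1,1)
    have k10 := key (2,0,1)
    have k11 := key (2,1,1)
    simp only [Fin.sum_univ_eight,
      show A (e0 0).val (Sum.inr (0,0,0)) = 1 from rfl,
      show A (e0 1).val (Sum.inr (0,0,0)) = 1 from rfl,
      show A (e0 2).val (Sum.inr (0,0,0)) = 0 from rfl,
      show A (e0 3).val (Sum.inr (0,0,0)) = 0 from rfl,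
      show A (e0 4).val (Sum.inr (0,0,0)) = 0 from rfl,
      show A (e0 5).val (Sum.inr (0,0,0)) = 0 from rfl,
      show A (e0 6).val (Sum.inr (0,0,0)) = 0 from rfl,
      show A (e0 7).val (Sum.inr (0,0,0)) = 0 from rfl,
      show A (e0 0).val (Sum.inr (0,1,0)) = 0 from rfl,
      show A (e0 1).val (Sum.inr (0,1,0)) = 0 from rfl,
      show A (e0 2).val (Sum.inr (0,1,0)) = 1 from rfl,
      show A (e0 3).val (Sum.inr (0,1,0)) = 1 from rfl,
      show A (e0 4).val (Sum.inr (0,1,0)) = 0 from rfl,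
      show A (e0 5).val (Sum.inr (0,1,0)) = 0 from rfl,
      show A (e0 6).val (Sum.inr (0,1,0)) = 0 from rfl,
      show A (e0 7).val (Sum.inr (0,1,0)) = 0 from rfl,
      show A (e0 0).val (Sum.inr (1,0,0)) = 1 from rfl,
      show A (e0 1).val (Sum.inr (1,0,0)) = 0 from rfl,
      show A (e0 2).val (Sum.inr (1,0,0)) = 1 from rfl,
      show A (e0 3).val (Sum.inr (1,0,0)) = 0 from rfl,
      show A (e0 4).val (Sum.inr (1,0,0)) = 0 from rfl,
      show A (e0 5).val (Sum.inr (1,0,0)) = 0 from rfl,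
      show A (e0 6).val (Sum.inr (1,0,0)) = 0 from rfl,
      show A (e0 7).val (Sum.inr (1,0,0)) = 0 from rfl,
      show A (e0 0).val (Sum.inr (1,1,0)) = 0 from rfl,
      show A (e0 1).val (Sum.inr (1,1,0)) = 1 from rfl,
      show A (e0 2).val (Sum.inr (1,1,0)) = 0 from rfl,
      show A (e0 3).val (Sum.inr (1,1,0)) = 1 from rfl,
      show A (e0 4).val (Sum.inr (1,1,0)) = 0 from rfl,
      show A (e0 5).val (Sum.inr (1,1,0)) = 0 from rfl,
      show A (e0 6).val (Sum.inr (1,1,0)) = 0 from rfl,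
      show A (e0 7).val (Sum.inr (1,1,0)) = 0 from rfl,
      show A (e0 0).val (Sum.inr (2,0,0)) = 1 from rfl,
      show A (e0 1).val (Sum.inr (2,0,0)) = 0 from rfl,
      show A (e0 2).val (Sum.inr (2,0,0)) = 0 from rfl,
      show A (e0 3).val (Sum.inr (2,0,0)) = 1 from rfl,
      show A (e0 4).val (Sum.inr (2,0,0)) = 0 from rfl,
      show A (e0 5).val (Sum.inr (2,0,0)) = 0 from rfl,
      show A (e0 6).val (Sum.inr (2,0,0)) = 0 from rfl,
      show A (e0 7).val (Sum.inr (2,0,0)) = 0 from rfl,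
      show A (e0 0).val (Sum.inr (2,1,0)) = 0 from rfl,
      show A (e0 1).val (Sum.inr (2,1,0)) = 1 from rfl,
      show A (e0 2).val (Sum.inr (2,1,0)) = 1 from rfl,
      show A (e0 3).val (Sum.inr (2,1,0)) = 0 from rfl,
      show A (e0 4).val (Sum.inr (2,1,0)) = 0 from rfl,
      show A (e0 5).val (Sum.inr (2,1,0)) = 0 from rfl,
      show A (e0 6).val (Sum.inr (2,1,0)) = 0 from rfl,
      show A (e0 7).val (Sum.inr (2,1,0)) = 0 from rfl,
      show A (e0 0).val (Sum.inr (0,0,1)) = 0 from rfl,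
      show A (e0 1).val (Sum.inr (0,0,1)) = 0 from rfl,
      show A (e0 2).val (Sum.inr (0,0,1)) = 0 from rfl,
      show A (e0 3).val (Sum.inr (0,0,1)) = 0 from rfl,
      show A (e0 4).val (Sum.inr (0,0,1)) = 1 from rfl,
      show A (e0 5).val (Sum.inr (0,0,1)) = 1 from rfl,
      show A (e0 6).val (Sum.inr (0,0,1)) = 0 from rfl,
      show A (e0 7).val (Sum.inr (0,0,1)) = 0 from rfl,
      show A (e0 0).val (Sum.inr (0,1,1)) = 0 from rfl,
      show A (e0 1).val (Sum.inr (0,1,1)) = 0 from rfl,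
      show A (e0 2).val (Sum.inr (0,1,1)) = 0 from rfl,
      show A (e0 3).val (Sum.inr (0,1,1)) = 0 from rfl,
      show A (e0 4).val (Sum.inr (0,1,1)) = 0 from rfl,
      show A (e0 5).val (Sum.inr (0,1,1)) = 0 from rfl,
      show A (e0 6).val (Sum.inr (0,1,1)) = 1 from rfl,
      show A (e0 7).val (Sum.inr (0,1,1)) = 1 from rfl,
      show A (e0 0).val (Sum.inr (1,0,1)) = 0 from rfl,
      show A (e0 1).val (Sum.inr (1,0,1)) = 0 from rfl,
      show A (e0 2).val (Sum.inr (1,0,1)) = 0 from rfl,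
      show A (e0 3).val (Sum.inr (1,0,1)) = 0 from rfl,
      show A (e0 4).val (Sum.inr (1,0,1)) = 1 from rfl,
      show A (e0 5).val (Sum.inr (1,0,1)) = 0 from rfl,
      show A (e0 6).val (Sum.inr (1,0,1)) = 1 from rfl,
      show A (e0 7).val (Sum.inr (1,0,1)) = 0 from rfl,
      show A (e0 0).val (Sum.inr (1,1,1)) = 0 from rfl,
      show A (e0 1).val (Sum.inr (1,1,1)) = 0 from rfl,
      show A (e0 2).val (Sum.inr (1,1,1)) = 0 from rfl,
      show A (e0 3).val (Sum.inr (1,1,1)) = 0 from rfl,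
      show A (e0 4).val (Sum.inr (1,1,1)) = 0 from rfl,
      show A (e0 5).val (Sum.inr (1,1,1)) = 1 from rfl,
      show A (e0 6).val (Sum.inr (1,1,1)) = 0 from rfl,
      show A (e0 7).val (Sum.inr (1,1,1)) = 1 from rfl,
      show A (e0 0).val (Sum.inr (2,0,1)) = 0 from rfl,
      show A (e0 1).val (Sum.inr (2,0,1)) = 0 from rfl,
      show A (e0 2).val (Sum.inr (2,0,1)) = 0 from rfl,
      show A (e0 3).val (Sum.inr (2,0,1)) = 0 from rfl,
      show A (e0 4).val (Sum.inr (2,0,1)) = 1 from rfl,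
      show A (e0 5).val (Sum.inr (2,0,1)) = 0 from rfl,
      show A (e0 6).val (Sum.inr (2,0,1)) = 0 from rfl,
      show A (e0 7).val (Sum.inr (2,0,1)) = 1 from rfl,
      show A (e0 0).val (Sum.inr (2,1,1)) = 0 from rfl,
      show A (e0 1).val (Sum.inr (2,1,1)) = 0 from rfl,
      show A (e0 2).val (Sum.inr (2,1,1)) = 0 from rfl,
      show A (e0 3).val (Sum.inr (2,1,1)) = 0 from rfl,
      show A (e0 4).val (Sum.inr (2,1,1)) = 0 from rfl,
      show A (e0 5).val (Sum.inr (2,1,1)) = 1 from rfl,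
      show A (e0 6).val (Sum.inr (2,1,1)) = 1 from rfl,
      show A (e0 7).val (Sum.inr (2,1,1)) = 0 from rfl,
      mul_one, mul_zero, add_zero, zero_add] at k0 k1 k2 k3 k4 k5 k6 k7 k8 k9 k10 k11
    have g0 : l (e0 0) = l' (e0 0) := by omega
    have g1 : l (e0 1) = l' (e0 1) := by omega
    have g2 : l (e0 2) = l' (e0 2) := by omega
    have g3 : l (e0 3) = l' (e0 3) := by omega
    have g4 : l (e0 4) = l' (e0 4) := by omega
    have g5 : l (e0 5) = l' (e0 5) := by omega
    have g6 : l (e0 6) = l' (e0 6) := by omega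
    have g7 : l (e0 7) = l' (e0 7) := by omega
    funext x
    obtain ⟨i, rfl⟩ := e0_bij.surjective x
    fin_cases i
    · exact g0
    · exact g1
    · exact g2
    · exact g3
    · exact g4
    · exact g5
    · exact g6
    · exact g7
  ·
    intro m m' h
    have key : ∀ j : Fin 3 × Fin 2 × Fin 2,
        ∑ i : Fin 8, (m (e1 i) : ℤ) * A (e1 i).val (Sum.inr j) =
        ∑ i : Fin 8, (m' (e1 i) : ℤ) * A (e1 i).val (Sum.inr j) := by
      intro j
      have hj := congrFun h j
      simp only [pr, Pi.add_apply, Finset.sum_apply, Pi.smul_apply, smul_eq_mul,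
        add_right_inj] at hj
      rw [← e1_bij.sum_comp (fun x => (m x : ℤ) * A x.val (Sum.inr j)),
          ← e1_bij.sum_comp (fun x => (m' x : ℤ) * A x.val (Sum.inr j))] at hj
      exact hj
    have k0 := key (0,0,0)
    have k1 := key (0,1,0)
    have k2 := key (1,0,0)
    have k3 := key (1,1,0)
    have k4 := key (2,0,0)
    have k5 := key (2,1,0)
    have k6 := key (0,0,1)
    have k7 := key (0,1,1)
    have k8 := key (1,0,1)
    have k9 := key (1,1,1)
    have k10 := key (2,0,1)
    have k11 := key (2,1,1)
    simp only [Fin.sum_univ_eight,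
      show A (e1 0).val (Sum.inr (0,0,0)) = 0 from rfl,
      show A (e1 1).val (Sum.inr (0,0,0)) = 1 from rfl,
      show A (e1 2).val (Sum.inr (0,0,0)) = 1 from rfl,
      show A (e1 3).val (Sum.inr (0,0,0)) = 0 from rfl,
      show A (e1 4).val (Sum.inr (0,0,0)) = 0 from rfl,
      show A (e1 5).val (Sum.inr (0,0,0)) = 0 from rfl,
      show A (e1 6).val (Sum.inr (0,0,0)) = 0 from rfl,
      show A (e1 7).val (Sum.inr (0,0,0)) = 0 from rfl,
      show A (e1 0).val (Sum.inr (0,1,0)) = 1 from rfl,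
      show A (e1 1).val (Sum.inr (0,1,0)) = 0 from rfl,
      show A (e1 2).val (Sum.inr (0,1,0)) = 0 from rfl,
      show A (e1 3).val (Sum.inr (0,1,0)) = 1 from rfl,
      show A (e1 4).val (Sum.inr (0,1,0)) = 0 from rfl,
      show A (e1 5).val (Sum.inr (0,1,0)) = 0 from rfl,
      show A (e1 6).val (Sum.inr (0,1,0)) = 0 from rfl,
      show A (e1 7).val (Sum.inr (0,1,0)) = 0 from rfl,
      show A (e1 0).val (Sum.inr (1,0,0)) = 1 from rfl,
      show A (e1 1).val (Sum.inr (1,0,0)) = 0 from rfl,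
      show A (e1 2).val (Sum.inr (1,0,0)) = 1 from rfl,
      show A (e1 3).val (Sum.inr (1,0,0)) = 0 from rfl,
      show A (e1 4).val (Sum.inr (1,0,0)) = 0 from rfl,
      show A (e1 5).val (Sum.inr (1,0,0)) = 0 from rfl,
      show A (e1 6).val (Sum.inr (1,0,0)) = 0 from rfl,
      show A (e1 7).val (Sum.inr (1,0,0)) = 0 from rfl,
      show A (e1 0).val (Sum.inr (1,1,0)) = 0 from rfl,
      show A (e1 1).val (Sum.inr (1,1,0)) = 1 from rfl,
      show A (e1 2).val (Sum.inr (1,1,0)) = 0 from rfl,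
      show A (e1 3).val (Sum.inr (1,1,0)) = 1 from rfl,
      show A (e1 4).val (Sum.inr (1,1,0)) = 0 from rfl,
      show A (e1 5).val (Sum.inr (1,1,0)) = 0 from rfl,
      show A (e1 6).val (Sum.inr (1,1,0)) = 0 from rfl,
      show A (e1 7).val (Sum.inr (1,1,0)) = 0 from rfl,
      show A (e1 0).val (Sum.inr (2,0,0)) = 1 from rfl,
      show A (e1 1).val (Sum.inr (2,0,0)) = 1 from rfl,
      show A (e1 2).val (Sum.inr (2,0,0)) = 0 from rfl,
      show A (e1 3).val (Sum.inr (2,0,0)) = 0 from rfl,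
      show A (e1 4).val (Sum.inr (2,0,0)) = 0 from rfl,
      show A (e1 5).val (Sum.inr (2,0,0)) = 0 from rfl,
      show A (e1 6).val (Sum.inr (2,0,0)) = 0 from rfl,
      show A (e1 7).val (Sum.inr (2,0,0)) = 0 from rfl,
      show A (e1 0).val (Sum.inr (2,1,0)) = 0 from rfl,
      show A (e1 1).val (Sum.inr (2,1,0)) = 0 from rfl,
      show A (e1 2).val (Sum.inr (2,1,0)) = 1 from rfl,
      show A (e1 3).val (Sum.inr (2,1,0)) = 1 from rfl,
      show A (e1 4).val (Sum.inr (2,1,0)) = 0 from rfl,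
      show A (e1 5).val (Sum.inr (2,1,0)) = 0 from rfl,
      show A (e1 6).val (Sum.inr (2,1,0)) = 0 from rfl,
      show A (e1 7).val (Sum.inr (2,1,0)) = 0 from rfl,
      show A (e1 0).val (Sum.inr (0,0,1)) = 0 from rfl,
      show A (e1 1).val (Sum.inr (0,0,1)) = 0 from rfl,
      show A (e1 2).val (Sum.inr (0,0,1)) = 0 from rfl,
      show A (e1 3).val (Sum.inr (0,0,1)) = 0 from rfl,
      show A (e1 4).val (Sum.inr (0,0,1)) = 0 from rfl,
      show A (e1 5).val (Sum.inr (0,0,1)) = 1 from rfl,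
      show A (e1 6).val (Sum.inr (0,0,1)) = 1 from rfl,
      show A (e1 7).val (Sum.inr (0,0,1)) = 0 from rfl,
      show A (e1 0).val (Sum.inr (0,1,1)) = 0 from rfl,
      show A (e1 1).val (Sum.inr (0,1,1)) = 0 from rfl,
      show A (e1 2).val (Sum.inr (0,1,1)) = 0 from rfl,
      show A (e1 3).val (Sum.inr (0,1,1)) = 0 from rfl,
      show A (e1 4).val (Sum.inr (0,1,1)) = 1 from rfl,
      show A (e1 5).val (Sum.inr (0,1,1)) = 0 from rfl,
      show A (e1 6).val (Sum.inr (0,1,1)) = 0 from rfl,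
      show A (e1 7).val (Sum.inr (0,1,1)) = 1 from rfl,
      show A (e1 0).val (Sum.inr (1,0,1)) = 0 from rfl,
      show A (e1 1).val (Sum.inr (1,0,1)) = 0 from rfl,
      show A (e1 2).val (Sum.inr (1,0,1)) = 0 from rfl,
      show A (e1 3).val (Sum.inr (1,0,1)) = 0 from rfl,
      show A (e1 4).val (Sum.inr (1,0,1)) = 1 from rfl,
      show A (e1 5).val (Sum.inr (1,0,1)) = 0 from rfl,
      show A (e1 6).val (Sum.inr (1,0,1)) = 1 from rfl,
      show A (e1 7).val (Sum.inr (1,0,1)) = 0 from rfl,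
      show A (e1 0).val (Sum.inr (1,1,1)) = 0 from rfl,
      show A (e1 1).val (Sum.inr (1,1,1)) = 0 from rfl,
      show A (e1 2).val (Sum.inr (1,1,1)) = 0 from rfl,
      show A (e1 3).val (Sum.inr (1,1,1)) = 0 from rfl,
      show A (e1 4).val (Sum.inr (1,1,1)) = 0 from rfl,
      show A (e1 5).val (Sum.inr (1,1,1)) = 1 from rfl,
      show A (e1 6).val (Sum.inr (1,1,1)) = 0 from rfl,
      show A (e1 7).val (Sum.inr (1,1,1)) = 1 from rfl,
      show A (e1 0).val (Sum.inr (2,0,1)) = 0 from rfl,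
      show A (e1 1).val (Sum.inr (2,0,1)) = 0 from rfl,
      show A (e1 2).val (Sum.inr (2,0,1)) = 0 from rfl,
      show A (e1 3).val (Sum.inr (2,0,1)) = 0 from rfl,
      show A (e1 4).val (Sum.inr (2,0,1)) = 1 from rfl,
      show A (e1 5).val (Sum.inr (2,0,1)) = 1 from rfl,
      show A (e1 6).val (Sum.inr (2,0,1)) = 0 from rfl,
      show A (e1 7).val (Sum.inr (2,0,1)) = 0 from rfl,
      show A (e1 0).val (Sum.inr (2,1,1)) = 0 from rfl,
      show A (e1 1).val (Sum.inr (2,1,1)) = 0 from rfl,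
      show A (e1 2).val (Sum.inr (2,1,1)) = 0 from rfl,
      show A (e1 3).val (Sum.inr (2,1,1)) = 0 from rfl,
      show A (e1 4).val (Sum.inr (2,1,1)) = 0 from rfl,
      show A (e1 5).val (Sum.inr (2,1,1)) = 0 from rfl,
      show A (e1 6).val (Sum.inr (2,1,1)) = 1 from rfl,
      show A (e1 7).val (Sum.inr (2,1,1)) = 1 from rfl,
      mul_one, mul_zero, add_zero, zero_add] at k0 k1 k2 k3 k4 k5 k6 k7 k8 k9 k10 k11
    have g0 : m (e1 0) = m' (e1 0) := by omega
    have g1 : m (e1 1) = m' (e1 1) := by omega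
    have g2 : m (e1 2) = m' (e1 2) := by omega
    have g3 : m (e1 3) = m' (e1 3) := by omega
    have g4 : m (e1 4) = m' (e1 4) := by omega
    have g5 : m (e1 5) = m' (e1 5) := by omega
    have g6 : m (e1 6) = m' (e1 6) := by omega
    have g7 : m (e1 7) = m' (e1 7) := by omega
    funext x
    obtain ⟨i, rfl⟩ := e1_bij.surjective x
    fin_cases i
    · exact g0
    · exact g1
    · exact g2
    · exact g3
    · exact g4
    · exact g5
    · exact g6
    · exact g7
end

section
/- For every λ : X₀ → ℕ one has l₁(h₁ + Σ_{x∈X₀} λ(x)•A(x)) > 0 and l₂(h₁ + Σ_{x∈X₀} λ(x)•A(x)) = 0, and for every μ : X₁ → ℕ one has l₁(h₂ + Σ_{x∈X₁} μ(x)•A(x)) = 0 and l₂(h₂ + Σ_{x∈X₁} μ(x)•A(x)) > 0. -/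
lemma l₁_add (f g : K4Index → ℤ) : l₁ (f + g) = l₁ f + l₁ g := by
  unfold l₁
  rw [← Finset.sum_add_distrib]
  refine Finset.sum_congr rfl fun t _ => ?_
  split <;> simp

lemma l₂_add (f g : K4Index → ℤ) : l₂ (f + g) = l₂ f + l₂ g := by
  unfold l₂
  rw [← Finset.sum_add_distrib]
  refine Finset.sum_congr rfl fun t _ => ?_
  split <;> simp

lemma l₁_sum {α : Type*} [Fintype α] (f : α → K4Index → ℤ) :
    l₁ (∑ x : α, f x) = ∑ x : α, l₁ (f x) := by
  unfold l₁
  rw [Finset.sum_comm]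
  refine Finset.sum_congr rfl fun t _ => ?_
  split <;> simp

lemma l₂_sum {α : Type*} [Fintype α] (f : α → K4Index → ℤ) :
    l₂ (∑ x : α, f x) = ∑ x : α, l₂ (f x) := by
  unfold l₂
  rw [Finset.sum_comm]
  refine Finset.sum_congr rfl fun t _ => ?_
  split <;> simp

lemma l₁_smul (c : ℤ) (f : K4Index → ℤ) : l₁ (c • f) = c * l₁ f := by
  unfold l₁
  rw [Finset.mul_sum]
  refine Finset.sum_congr rfl fun t _ => ?_
  split <;> simp

lemma l₂_smul (c : ℤ) (f : K4Index → ℤ) : l₂ (c • f) = c * l₂ f := by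
  unfold l₂
  rw [Finset.mul_sum]
  refine Finset.sum_congr rfl fun t _ => ?_
  split <;> simp

lemma l₁_h₁ : l₁ h₁ = 4 := by decide
lemma l₂_h₁ : l₂ h₁ = 0 := by decide
lemma l₁_h₂ : l₁ h₂ = 0 := by decide
lemma l₂_h₂ : l₂ h₂ = 4 := by decide

lemma lA₀ : ∀ x : K4State, x 0 + x 1 + x 2 = 0 → l₁ (A x) = 1 ∧ l₂ (A x) = 0 := by
  decide

lemma lA₁ : ∀ x : K4State, x 0 + x 1 + x 2 = 1 → l₁ (A x) = 0 ∧ l₂ (A x) = 1 := by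
  decide

/-- The functionals `l₁, l₂` evaluated on the holes: `l₁ > 0 = l₂` on the holes of
type 1, and `l₁ = 0 < l₂` on the holes of type 2. -/
theorem l_functionals_on_holes :
    (∀ l : X₀ → ℕ,
      0 < l₁ (h₁ + ∑ x : X₀, (l x : ℤ) • A x.val) ∧
      l₂ (h₁ + ∑ x : X₀, (l x : ℤ) • A x.val) = 0) ∧
    (∀ m : X₁ → ℕ,
      l₁ (h₂ + ∑ x : X₁, (m x : ℤ) • A x.val) = 0 ∧
      0 < l₂ (h₂ + ∑ x : X₁, (m x : ℤ) • A x.val)) := by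
  constructor
  · intro l
    have h1 : ∀ x : X₀, l₁ ((l x : ℤ) • A x.val) = (l x : ℤ) := by
      intro x; rw [l₁_smul, (lA₀ x.val x.prop).1, mul_one]
    have h2 : ∀ x : X₀, l₂ ((l x : ℤ) • A x.val) = 0 := by
      intro x; rw [l₂_smul, (lA₀ x.val x.prop).2, mul_zero]
    constructor
    · rw [l₁_add, l₁_h₁, l₁_sum]
      simp only [h1]
      have : (0:ℤ) ≤ ∑ x : X₀, (l x : ℤ) :=
        Finset.sum_nonneg fun x _ => Int.natCast_nonneg _
      linarith
    · rw [l₂_add, l₂_h₁, l₂_sum]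
      simp only [h2, Finset.sum_const_zero, add_zero]
  · intro m
    have h1 : ∀ x : X₁, l₁ ((m x : ℤ) • A x.val) = 0 := by
      intro x; rw [l₁_smul, (lA₁ x.val x.prop).1, mul_zero]
    have h2 : ∀ x : X₁, l₂ ((m x : ℤ) • A x.val) = (m x : ℤ) := by
      intro x; rw [l₂_smul, (lA₁ x.val x.prop).2, mul_one]
    constructor
    · rw [l₁_add, l₁_h₂, l₁_sum]
      simp only [h1, Finset.sum_const_zero, zero_add]
    · rw [l₂_add, l₂_h₂, l₂_sum]
      simp only [h2]
      have : (0:ℤ) ≤ ∑ x : X₁, (m x : ℤ) :=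
        Finset.sum_nonneg fun x _ => Int.natCast_nonneg _
      linarith
end

section
/- If a projected fiber contains a hole of type i, then the functional l_{3−i} strictly separates the hole from the semigroup elements of that fiber: for every λ : X₀ → ℕ and every v ∈ S with π(v) = π(h₁ + Σ_{x∈X₀} λ(x)•A(x)), one has l₂(v) > 0 while l₂(h₁ + Σ_{x∈X₀} λ(x)•A(x)) = 0; and for every μ : X₁ → ℕ and every v ∈ S with π(v) = π(h₂ + Σ_{x∈X₁} μ(x)•A(x)), one has l₁(v) > 0 while l₁(h₂ + Σ_{x∈X₁} μ(x)•A(x)) = 0. -/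
/-! The certificate for a hole of type `i` is a pair of functionals: `l_{3-i}`, which is
nonnegative on every `A x` and vanishes exactly on `A(X_i)`, and the parity of a sum of
three edge coordinates, which depends only on the three-star marginal. For `X₀` one counts
the edges `(i,(1,0))`: when `x₄ = 0` this is the number of ones among `x₁,x₂,x₃`, which is
even. For `X₁` one counts the edges `(i,(0,0))`, the number of zeros, again even. Both counts
equal 3 on the holes. An element of `S` on which `l_{3-i}` vanishes is a sum of vectors
`A x` with `x ∈ X_i`, so its count is even and it cannot share the marginal of the hole. -/

section ParityCertificate

variable {G : Type*} [AddCommGroup G] (f g : G →+ ℤ)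

theorem nonneg_and_even_of_mem_closure {s : Set G}
    (hs : ∀ a ∈ s, 0 ≤ f a ∧ (f a = 0 → Even (g a))) {v : G}
    (hv : v ∈ AddSubmonoid.closure s) : 0 ≤ f v ∧ (f v = 0 → Even (g v)) := by
  induction hv using AddSubmonoid.closure_induction with
  | mem a ha => exact hs a ha
  | zero => simp
  | add a b _ _ ha hb =>
    rw [map_add, map_add]
    refine ⟨add_nonneg ha.1 hb.1, fun hab => ?_⟩
    have hfa : f a = 0 := by linarith [ha.1, hb.1]
    have hfb : f b = 0 := by linarith
    exact (ha.2 hfa).add (hb.2 hfb)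

theorem pos_of_mem_closure_of_odd {s : Set G}
    (hs : ∀ a ∈ s, 0 ≤ f a ∧ (f a = 0 → Even (g a))) {v : G}
    (hv : v ∈ AddSubmonoid.closure s) (hodd : Odd (g v)) : 0 < f v := by
  obtain ⟨hnonneg, heven⟩ := nonneg_and_even_of_mem_closure f g hs hv
  exact hnonneg.lt_of_ne fun h0 => Int.not_even_iff_odd.2 hodd (heven h0.symm)

theorem eq_zero_and_odd_add_sum {ι : Type*} [Fintype ι] {h : G} {a : ι → G}
    (hfh : f h = 0) (hgh : Odd (g h)) (hfa : ∀ i, f (a i) = 0) (hga : ∀ i, Even (g (a i)))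
    (c : ι → ℕ) :
    f (h + ∑ i, (c i : ℤ) • a i) = 0 ∧ Odd (g (h + ∑ i, (c i : ℤ) • a i)) := by
  simp only [map_add, map_sum, map_zsmul, smul_eq_mul, hfh, hfa, mul_zero,
    Finset.sum_const_zero, add_zero, true_and]
  exact hgh.add_even (Finset.even_sum _ fun i _ => (hga i).mul_left _)

end ParityCertificate

def triangleSum (p : Fin 2) : (K4Index → ℤ) →+ ℤ :=
  AddMonoidHom.mk' (fun y => ∑ t : Fin 2 × Fin 2 × Fin 2,
    if t.1 + t.2.1 + t.2.2 = p then y (Sum.inl t) else 0) fun y z => by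
      simp only [Pi.add_apply, ← Finset.sum_add_distrib, ite_add_ite, add_zero]

theorem triangleSum_zero_apply (y : K4Index → ℤ) : triangleSum 0 y = l₁ y := rfl

theorem triangleSum_one_apply (y : K4Index → ℤ) : triangleSum 1 y = l₂ y := rfl

theorem triangleSum_A (p : Fin 2) (x : K4State) :
    triangleSum p (A x) = if x 0 + x 1 + x 2 = p then 1 else 0 := by
  revert p x; decide

def edgeCount (e : Fin 2 × Fin 2) : (K4Index → ℤ) →+ ℤ :=
  ∑ i : Fin 3, Pi.evalAddMonoidHom (fun _ => ℤ) (Sum.inr (i, e))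

theorem edgeCount_apply (e : Fin 2 × Fin 2) (y : K4Index → ℤ) :
    edgeCount e y = ∑ i : Fin 3, pr y (i, e) := by
  simp [edgeCount, pr]

theorem edgeCount_eq_of_pr_eq {v w : K4Index → ℤ} (hvw : pr v = pr w) (e : Fin 2 × Fin 2) :
    edgeCount e v = edgeCount e w := by
  rw [edgeCount_apply, edgeCount_apply, hvw]

theorem even_edgeCount_one_zero_A {x : K4State} (hx : x 0 + x 1 + x 2 = 0) :
    Even (edgeCount (1, 0) (A x)) := by
  revert x; decide

theorem even_edgeCount_zero_zero_A {x : K4State} (hx : x 0 + x 1 + x 2 = 1) :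
    Even (edgeCount (0, 0) (A x)) := by
  revert x; decide

theorem odd_edgeCount_h₁ (e : Fin 2 × Fin 2) : Odd (edgeCount e h₁) := by
  revert e; decide

theorem odd_edgeCount_h₂ (e : Fin 2 × Fin 2) : Odd (edgeCount e h₂) := by
  revert e; decide

theorem triangleSum_one_h₁ : triangleSum 1 h₁ = 0 := by decide

theorem triangleSum_zero_h₂ : triangleSum 0 h₂ = 0 := by decide

section Separation

variable {p q : Fin 2} {e : Fin 2 × Fin 2}

theorem nonneg_and_even_of_mem_range_A (hpq : p ≠ q)
    (he : ∀ x : K4State, x 0 + x 1 + x 2 = q → Even (edgeCount e (A x))) :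
    ∀ a ∈ Set.range A, 0 ≤ triangleSum p a ∧ (triangleSum p a = 0 → Even (edgeCount e a)) := by
  rintro _ ⟨x, rfl⟩
  rw [triangleSum_A]
  refine ⟨by split_ifs <;> norm_num, fun hx => he x ?_⟩
  split_ifs at hx with hp
  · exact absurd hx one_ne_zero
  · omega

theorem triangleSum_separates_hole (hpq : p ≠ q)
    (he : ∀ x : K4State, x 0 + x 1 + x 2 = q → Even (edgeCount e (A x)))
    {h : K4Index → ℤ} (hph : triangleSum p h = 0) (heh : Odd (edgeCount e h))
    (c : {x : K4State // x 0 + x 1 + x 2 = q} → ℕ) {v : K4Index → ℤ} (hv : v ∈ S)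
    (hpr : pr v = pr (h + ∑ x, (c x : ℤ) • A x.val)) :
    0 < triangleSum p v ∧ triangleSum p (h + ∑ x, (c x : ℤ) • A x.val) = 0 := by
  have hA (x : {x : K4State // x 0 + x 1 + x 2 = q}) : triangleSum p (A x.val) = 0 := by
    rw [triangleSum_A, x.2, if_neg hpq.symm]
  obtain ⟨hzero, hodd⟩ :=
    eq_zero_and_odd_add_sum _ _ hph heh hA (fun x => he x.val x.2) c
  rw [← edgeCount_eq_of_pr_eq hpr] at hodd
  exact ⟨pos_of_mem_closure_of_odd _ _ (nonneg_and_even_of_mem_range_A hpq he) hv hodd, hzero⟩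

end Separation

/-- If a projected fiber contains a hole of type `i`, then `l_{3-i}` strictly
separates the hole from the semigroup elements of that fiber. -/
theorem l_functionals_separate_holes :
    (∀ l : X₀ → ℕ, ∀ v ∈ S,
      pr v = pr (h₁ + ∑ x : X₀, (l x : ℤ) • A x.val) →
        0 < l₂ v ∧ l₂ (h₁ + ∑ x : X₀, (l x : ℤ) • A x.val) = 0) ∧
    (∀ m : X₁ → ℕ, ∀ v ∈ S,
      pr v = pr (h₂ + ∑ x : X₁, (m x : ℤ) • A x.val) →
        0 < l₁ v ∧ l₁ (h₂ + ∑ x : X₁, (m x : ℤ) • A x.val) = 0) := by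
  refine ⟨fun l v hv hpr => ?_, fun m v hv hpr => ?_⟩
  · simpa only [triangleSum_one_apply] using triangleSum_separates_hole one_ne_zero
      (fun _ => even_edgeCount_one_zero_A) triangleSum_one_h₁ (odd_edgeCount_h₁ _) l hv hpr
  · simpa only [triangleSum_zero_apply] using triangleSum_separates_hole zero_ne_one
      (fun _ => even_edgeCount_zero_zero_A) triangleSum_zero_h₂ (odd_edgeCount_h₂ _) m hv hpr
end

section
/- A projected fiber can contain one hole of each type: the vectors h₁ + Σ_{x∈X₀} A(x) and h₂ + Σ_{x∈X₁} A(x) have the same three-star marginals, i.e. π(h₁ + Σ_{x∈X₀} A(x)) = π(h₂ + Σ_{x∈X₁} A(x)). -/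
/-- A projected fiber can contain one hole of each type: the holes
`h₁ + Σ_{x∈X₀} A(x)` and `h₂ + Σ_{x∈X₁} A(x)` have the same three-star
marginals. -/
theorem holes_in_same_projected_fiber :
    pr (h₁ + ∑ x : X₀, A x.val) = pr (h₂ + ∑ x : X₁, A x.val) := by
  funext j
  fin_cases j <;> simp [pr, h₁, h₂, A, Finset.sum_subtype_eq_sum_filter] <;> decide
end
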